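/- For every r with 0 ≤ r ≤ 1/√6, the state S₁(r) = (1/√6)(|↑↑0⟩+|↓↓0⟩+|↓0↓⟩+|↑0↑⟩) + √(1/6 − r²)(|0↓↓⟩+|0↑↑⟩) + r(|0↓↑⟩ − |0↑↓⟩) is a unit vector in (ℂ³)^{⊗3} and all three single-mode reduced density matrices equal (1/3)·I₃. -/
import Mathlib


open Finset

/-- Reduced density matrix of mode A (trace out B and C). -/
noncomputable def rhoA (m : Fin 3 → Fin 3 → Fin 3 → ℂ) : Matrix (Fin 3) (Fin 3) ℂ :=
  fun a a' => ∑ j : Fin 3, ∑ k : Fin 3, m a j k * (starRingEnd ℂ) (m a' j k)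

/-- Reduced density matrix of mode B (trace out A and C). -/
noncomputable def rhoB (m : Fin 3 → Fin 3 → Fin 3 → ℂ) : Matrix (Fin 3) (Fin 3) ℂ :=
  fun b b' => ∑ i : Fin 3, ∑ k : Fin 3, m i b k * (starRingEnd ℂ) (m i b' k)

/-- Reduced density matrix of mode C (trace out A and B). -/
noncomputable def rhoC (m : Fin 3 → Fin 3 → Fin 3 → ℂ) : Matrix (Fin 3) (Fin 3) ℂ :=
  fun c c' => ∑ i : Fin 3, ∑ j : Fin 3, m i j c * (starRingEnd ℂ) (m i j c')

/-- The family `S₁(r)` of maximally entangled states, with `↑ = 0`, `↓ = 1`, empty `= 2`: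
`(1/√6)(|↑↑0⟩+|↓↓0⟩+|↓0↓⟩+|↑0↑⟩) + √(1/6−r²)(|0↓↓⟩+|0↑↑⟩) + r(|0↓↑⟩−|0↑↓⟩)`. -/
noncomputable def S1 (r : ℝ) : Fin 3 → Fin 3 → Fin 3 → ℂ := fun i j k =>
  if (i, j, k) = (0, 0, 2) ∨ (i, j, k) = (1, 1, 2) ∨ (i, j, k) = (1, 2, 1) ∨
     (i, j, k) = (0, 2, 0) then ((Real.sqrt 6 : ℝ) : ℂ)⁻¹
  else if (i, j, k) = (2, 1, 1) ∨ (i, j, k) = (2, 0, 0) then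
    ((Real.sqrt (1 / 6 - r ^ 2) : ℝ) : ℂ)
  else if (i, j, k) = (2, 1, 0) then (r : ℂ)
  else if (i, j, k) = (2, 0, 1) then -(r : ℂ)
  else 0

set_option maxHeartbeats 2000000 in
theorem stmt_10 (r : ℝ) (h0 : 0 ≤ r) (h1 : r ≤ (Real.sqrt 6)⁻¹) :
    (∑ i : Fin 3, ∑ j : Fin 3, ∑ k : Fin 3, S1 r i j k * (starRingEnd ℂ) (S1 r i j k)) = 1 ∧
    rhoA (S1 r) = ((3 : ℂ)⁻¹) • (1 : Matrix (Fin 3) (Fin 3) ℂ) ∧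
    rhoB (S1 r) = ((3 : ℂ)⁻¹) • (1 : Matrix (Fin 3) (Fin 3) ℂ) ∧
    rhoC (S1 r) = ((3 : ℂ)⁻¹) • (1 : Matrix (Fin 3) (Fin 3) ℂ) := by
  have hr2 : r ^ 2 ≤ 1 / 6 := by
    have h6 : (Real.sqrt 6)⁻¹ ^ 2 = 1 / 6 := by
      rw [inv_pow, Real.sq_sqrt (by norm_num : (0:ℝ) ≤ 6)]; norm_num
    calc r ^ 2 ≤ (Real.sqrt 6)⁻¹ ^ 2 := pow_le_pow_left₀ h0 h1 2
      _ = 1 / 6 := h6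
  have h6c : (((Real.sqrt 6 : ℝ)) : ℂ)⁻¹ * (((Real.sqrt 6 : ℝ)) : ℂ)⁻¹ = 6⁻¹ := by
    rw [← Complex.ofReal_inv, ← Complex.ofReal_mul]
    rw [← mul_inv, Real.mul_self_sqrt (by norm_num : (0:ℝ) ≤ 6)]
    norm_num
  have hsc : ((Real.sqrt (1 / 6 - r ^ 2) : ℝ) : ℂ) * ((Real.sqrt (1 / 6 - r ^ 2) : ℝ) : ℂ)
      = 6⁻¹ - (r : ℂ) * r := by
    rw [← Complex.ofReal_mul, Real.mul_self_sqrt (by linarith)]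
    push_cast; ring
  have h6p : (((Real.sqrt 6 : ℝ)) : ℂ)⁻¹ ^ 2 = 6⁻¹ := by rw [sq]; exact h6c
  have hsp : ((Real.sqrt (1 / 6 - r ^ 2) : ℝ) : ℂ) ^ 2 = 6⁻¹ - (r : ℂ) * r := by
    rw [sq]; exact hsc
  refine ⟨?_, ?_, ?_, ?_⟩
  · simp only [S1, Fin.sum_univ_three]
    norm_num [Prod.ext_iff, Fin.ext_iff, map_inv₀, Complex.conj_ofReal, map_neg]
    linear_combination 4 * h6c + 2 * hsc
  all_goals
    funext a b
    fin_cases a <;> fin_cases b <;>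
      simp only [rhoA, rhoB, rhoC, S1, Fin.sum_univ_three, Matrix.smul_apply,
        Matrix.one_apply] <;>
      norm_num [Prod.ext_iff, Fin.ext_iff, map_inv₀, Complex.conj_ofReal, map_neg]
  all_goals (ring_nf; try simp only [h6p, hsp]; try ring)
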